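/- Let c ∈ ℝ^k be such that A = Σ_j c_j A_j is invertible, and let a ∈ ℂ^m be such that the matrix Re B is nonsingular, where B is the k×k matrix with entries B_{lj} = ⟨A_l A^{-1} A_j a, a⟩ and Re B = (B + conj(B))/2. Then (a^{Re F})^{Re F} ∩ a^{Re F} = {0}. -/

import Mathlib

open Matrix Complex

/-- The standard Hermitian inner product on `ℂ^m`: `⟪a,b⟫ = ∑ l, a l * conj (b l)`. -/
noncomputable def hermInner {m : ℕ} (a b : Fin m → ℂ) : ℂ :=
  ∑ l, a l * (starRingEnd ℂ) (b l)

/-- The `ℂ^k`-valued Hermitian form `F(z,ζ) = (⟪A₁ z, ζ⟫, …, ⟪A_k z, ζ⟫)`. -/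
noncomputable def Fform {m k : ℕ} (A : Fin k → Matrix (Fin m) (Fin m) ℂ)
    (z ζ : Fin m → ℂ) : Fin k → ℂ :=
  fun j => hermInner ((A j).mulVec z) ζ

/-- The orthogonal complement `S^F` of a set `S ⊆ ℂ^m`. -/
noncomputable def orthF {m k : ℕ} (A : Fin k → Matrix (Fin m) (Fin m) ℂ)
    (S : Set (Fin m → ℂ)) : Set (Fin m → ℂ) :=
  {x | ∀ y ∈ S, Fform A x y = 0}

/-- The subspace `T(a,b) = {y : ∃ x, F(x,b) + F(a,y) = 0}`. -/
noncomputable def Tspace {m k : ℕ} (A : Fin k → Matrix (Fin m) (Fin m) ℂ)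
    (a b : Fin m → ℂ) : Set (Fin m → ℂ) :=
  {y | ∃ x, Fform A x b + Fform A a y = 0}

/-- `F` is nondegenerate: the `A_j` are `ℝ`-linearly independent, and
`F(z,ζ) = 0` for all `z` implies `ζ = 0`. -/
noncomputable def FNondeg {m k : ℕ} (A : Fin k → Matrix (Fin m) (Fin m) ℂ) : Prop :=
  LinearIndependent ℝ A ∧ ∀ ζ : Fin m → ℂ, (∀ z : Fin m → ℂ, Fform A z ζ = 0) → ζ = 0

/-- `F` is T-nondegenerate: for generic `a ∈ ℂ^m`, `T(a)^F = {0}`. -/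
noncomputable def TNondeg {m k : ℕ} (A : Fin k → Matrix (Fin m) (Fin m) ℂ) : Prop :=
  ∃ U : Set (Fin m → ℂ), IsOpen U ∧ Dense U ∧
    ∀ a ∈ U, orthF A (Tspace A a a) = {0}

/-- The orthogonal complement `S^{Re F}` of a set `S ⊆ ℂ^m` with respect to
the componentwise real part of `F`. -/
noncomputable def orthReF {m k : ℕ} (A : Fin k → Matrix (Fin m) (Fin m) ℂ)
    (S : Set (Fin m → ℂ)) : Set (Fin m → ℂ) :=
  {x | ∀ y ∈ S, ∀ j, (Fform A x y j).re = 0}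

/-- The `k×k` matrix `B` with entries `B_{lj} = ⟪A_l A⁻¹ A_j a, a⟫`,
where `Amat = ∑ c_j A_j`. -/
noncomputable def Bmatrix {m k : ℕ} (A : Fin k → Matrix (Fin m) (Fin m) ℂ)
    (c : Fin k → ℝ) (a : Fin m → ℂ) : Matrix (Fin k) (Fin k) ℂ :=
  Matrix.of fun l j => hermInner ((A l * (∑ i, (c i : ℂ) • A i)⁻¹ * A j).mulVec a) a

/-- `Re B = (B + conj B)/2` (entrywise conjugate). -/
noncomputable def ReB {m k : ℕ} (A : Fin k → Matrix (Fin m) (Fin m) ℂ)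
    (c : Fin k → ℝ) (a : Fin m → ℂ) : Matrix (Fin k) (Fin k) ℂ :=
  (2 : ℂ)⁻¹ • (Bmatrix A c a + (Bmatrix A c a).map (starRingEnd ℂ))

/-!
Since the `A_j` are Hermitian, `a^{Re F}` is the orthogonal complement of
`V = span_ℝ {A_j a}` for the real inner product `Re ⟪·,·⟫` on `ℂ^m`, so finite-dimensional
duality puts `A_l x ∈ V` for every `x ∈ (a^{Re F})^{Re F}` and every `l`. Then
`A x = ∑ s_j A_j a` with `s` real, hence `x = A⁻¹ ∑ s_j A_j a` and `F(x,a) = B s`.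
If moreover `x ∈ a^{Re F}`, then `(Re B) s = Re (B s) = 0`, so `s = 0`, `A x = 0` and `x = 0`.
-/

section HermInner

variable {m : ℕ}

lemma hermInner_eq_dotProduct (u v : Fin m → ℂ) : hermInner u v = u ⬝ᵥ star v := rfl

lemma re_hermInner_comm (u v : Fin m → ℂ) : (hermInner u v).re = (hermInner v u).re := by
  rw [← Complex.conj_re (hermInner v u)]
  simp [hermInner, mul_comm]

lemma eq_zero_of_re_hermInner_self (w : Fin m → ℂ) (h : (hermInner w w).re = 0) : w = 0 := by
  have hsum : ∑ l, Complex.normSq (w l) = 0 := by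
    simpa [hermInner, Complex.mul_conj] using h
  funext l
  simpa using (Finset.sum_eq_zero_iff_of_nonneg fun i _ => Complex.normSq_nonneg (w i)).1
    hsum l (Finset.mem_univ l)

lemma hermInner_mulVec_left_of_isHermitian {M : Matrix (Fin m) (Fin m) ℂ} (hM : M.IsHermitian)
    (x y : Fin m → ℂ) : hermInner (M *ᵥ x) y = hermInner x (M *ᵥ y) := by
  rw [hermInner_eq_dotProduct, hermInner_eq_dotProduct, dotProduct_comm, dotProduct_mulVec,
    dotProduct_comm, star_mulVec, hM.eq]

noncomputable def reHermInner : (Fin m → ℂ) →ₗ[ℝ] Module.Dual ℝ (Fin m → ℂ) :=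
  LinearMap.mk₂ ℝ (fun w y => (hermInner y w).re)
    (fun w₁ w₂ y => by simp [hermInner, mul_add, Finset.sum_add_distrib])
    (fun r w y => by simp [hermInner, Finset.mul_sum, mul_add, mul_left_comm])
    (fun w y₁ y₂ => by simp [hermInner, add_mul, Finset.sum_add_distrib])
    (fun r w y => by simp [hermInner, Finset.mul_sum, mul_assoc])

lemma reHermInner_apply (w y : Fin m → ℂ) : reHermInner w y = (hermInner y w).re := rfl

lemma reHermInner_injective : Function.Injective (reHermInner (m := m)) :=
  (injective_iff_map_eq_zero _).2 fun w hw =>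
    eq_zero_of_re_hermInner_self w (LinearMap.congr_fun hw w)

lemma mem_span_of_re_hermInner {ι : Type*} [Finite ι] {v : ι → Fin m → ℂ} {w : Fin m → ℂ}
    (h : ∀ y, (∀ j, (hermInner y (v j)).re = 0) → (hermInner y w).re = 0) :
    w ∈ Submodule.span ℝ (Set.range v) := by
  have hL : reHermInner w ∈ Submodule.span ℝ (Set.range (reHermInner ∘ v)) :=
    mem_span_of_iInf_ker_le_ker fun y hy =>
      h y (by simpa [Submodule.mem_iInf, reHermInner_apply] using hy)
  rw [Set.range_comp, Submodule.span_image] at hL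
  obtain ⟨w', hw', hw'w⟩ := hL
  exact reHermInner_injective hw'w ▸ hw'

end HermInner

section Orthogonality

variable {m k : ℕ} {A : Fin k → Matrix (Fin m) (Fin m) ℂ}

lemma zero_mem_orthReF (S : Set (Fin m → ℂ)) : 0 ∈ orthReF A S := by
  intro y _ j
  simp [Fform, hermInner]

lemma mem_orthReF_singleton_iff (hHerm : ∀ j, (A j).IsHermitian) {x a : Fin m → ℂ} :
    x ∈ orthReF A {a} ↔ ∀ j, (hermInner x (A j *ᵥ a)).re = 0 := by
  simp [orthReF, Fform, hermInner_mulVec_left_of_isHermitian (hHerm _)]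

lemma mulVec_mem_span_of_mem_orthReF_orthReF (hHerm : ∀ j, (A j).IsHermitian)
    {x a : Fin m → ℂ} (hx : x ∈ orthReF A (orthReF A {a})) (l : Fin k) :
    A l *ᵥ x ∈ Submodule.span ℝ (Set.range fun j => A j *ᵥ a) :=
  mem_span_of_re_hermInner fun y hy => by
    rw [re_hermInner_comm]
    exact hx y ((mem_orthReF_singleton_iff hHerm).2 hy) l

lemma sum_smul_mulVec_mem_span_of_mem_orthReF_orthReF (hHerm : ∀ j, (A j).IsHermitian)
    (c : Fin k → ℝ) {x a : Fin m → ℂ} (hx : x ∈ orthReF A (orthReF A {a})) :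
    (∑ i, (c i : ℂ) • A i) *ᵥ x ∈ Submodule.span ℝ (Set.range fun j => A j *ᵥ a) := by
  rw [sum_mulVec]
  refine Submodule.sum_mem _ fun i _ => ?_
  rw [smul_mulVec, Complex.coe_smul]
  exact Submodule.smul_mem _ _ (mulVec_mem_span_of_mem_orthReF_orthReF hHerm hx i)

end Orthogonality

lemma map_re_mulVec_ofReal {m n : Type*} [Fintype n] (B : Matrix m n ℂ) (s : n → ℝ) :
    B.map (fun z => (z.re : ℂ)) *ᵥ (fun j => (s j : ℂ)) =
      fun i => (((B *ᵥ fun j => (s j : ℂ)) i).re : ℂ) := by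
  funext i
  simp [mulVec, dotProduct, Complex.re_sum]

lemma ReB_eq_map_re {m k : ℕ} (A : Fin k → Matrix (Fin m) (Fin m) ℂ) (c : Fin k → ℝ)
    (a : Fin m → ℂ) : ReB A c a = (Bmatrix A c a).map fun z => (z.re : ℂ) := by
  ext l j
  simp only [ReB, Matrix.smul_apply, Matrix.add_apply, map_apply, smul_eq_mul,
    Complex.re_eq_add_conj]
  ring

lemma Fform_eq_Bmatrix_mulVec {m k : ℕ} {A : Fin k → Matrix (Fin m) (Fin m) ℂ} {c : Fin k → ℝ}
    (hA : IsUnit (∑ i, (c i : ℂ) • A i)) {x a : Fin m → ℂ} {s : Fin k → ℝ}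
    (hs : ∑ j, s j • (A j *ᵥ a) = (∑ i, (c i : ℂ) • A i) *ᵥ x) :
    Fform A x a = Bmatrix A c a *ᵥ fun j => (s j : ℂ) := by
  set Amat := ∑ i, (c i : ℂ) • A i
  have hinv : Amat⁻¹ * Amat = 1 := nonsing_inv_mul _ ((isUnit_iff_isUnit_det _).1 hA)
  funext l
  have hAlx : A l *ᵥ x = ∑ j, (s j : ℂ) • ((A l * Amat⁻¹ * A j) *ᵥ a) :=
    calc A l *ᵥ x = (A l * Amat⁻¹) *ᵥ (Amat *ᵥ x) := by
          rw [mulVec_mulVec, Matrix.mul_assoc, hinv, Matrix.mul_one]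
      _ = _ := by simp [← hs, mulVec_sum, mulVec_smul, mulVec_mulVec, Complex.coe_smul]
  rw [Fform, hAlx, hermInner_eq_dotProduct, sum_dotProduct]
  simp only [smul_dotProduct, smul_eq_mul]
  exact Finset.sum_congr rfl fun j _ => mul_comm _ _

theorem stmt12_general {m k : ℕ}
    (A : Fin k → Matrix (Fin m) (Fin m) ℂ) (hHerm : ∀ j, (A j).IsHermitian)
    (c : Fin k → ℝ) (hA : IsUnit (∑ i, (c i : ℂ) • A i))
    (a : Fin m → ℂ) (hB : (ReB A c a).det ≠ 0) :
    orthReF A (orthReF A {a}) ∩ orthReF A {a} = {0} := by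
  refine Set.eq_singleton_iff_unique_mem.2 ⟨⟨zero_mem_orthReF _, zero_mem_orthReF _⟩, ?_⟩
  rintro x ⟨hxx, hx⟩
  obtain ⟨s, hs⟩ := (Submodule.mem_span_range_iff_exists_fun ℝ).1
    (sum_smul_mulVec_mem_span_of_mem_orthReF_orthReF hHerm c hxx)
  have hs0 : s = 0 := by
    suffices h : (fun j => (s j : ℂ)) = 0 from
      funext fun j => Complex.ofReal_eq_zero.1 (congrFun h j)
    refine eq_zero_of_mulVec_eq_zero hB ?_
    rw [ReB_eq_map_re, map_re_mulVec_ofReal, ← Fform_eq_Bmatrix_mulVec hA hs]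
    funext l
    simp [hx a rfl l]
  have hAx : (∑ i, (c i : ℂ) • A i) *ᵥ x = 0 := by
    rw [← hs, hs0]
    simp
  exact eq_zero_of_mulVec_eq_zero ((isUnit_iff_isUnit_det _).1 hA).ne_zero hAx

theorem stmt12 {m k : ℕ} (hm : 0 < m) (hk : 0 < k)
    (A : Fin k → Matrix (Fin m) (Fin m) ℂ) (hHerm : ∀ j, (A j).IsHermitian)
    (c : Fin k → ℝ) (hA : IsUnit (∑ i, (c i : ℂ) • A i))
    (a : Fin m → ℂ) (hB : (ReB A c a).det ≠ 0) :
    orthReF A (orthReF A {a}) ∩ orthReF A {a} = {0} :=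
  stmt12_general A hHerm c hA a hB
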